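/- Let Φ : 𝒜_u(B_{ℓ₂}) → ℋ^∞(B_{ℓ₂}) be a nonzero continuous ℂ-algebra homomorphism. Then: (i) Φ(1) = 1 and, for every x ∈ B_{ℓ₂}, the map δ_x ∘ Φ : f ↦ Φ(f)(x) is a nonzero continuous ℂ-algebra homomorphism from 𝒜_u(B_{ℓ₂}) to ℂ, i.e. δ_x ∘ Φ ∈ ℳ_u(B_{ℓ₂}); (ii) for every x ∈ B_{ℓ₂}, the sequence (Φ(⟨·,e_n⟩)(x))_n belongs to the closed unit ball of ℓ₂ and equals π(δ_x ∘ Φ); (iii) the function ξ(Φ) : x ↦ (Φ(⟨·,e_n⟩)(x))_n is holomorphic on B_{ℓ₂}, so ξ(Φ) ∈ ℋ^∞(B_{ℓ₂},ℓ₂) with ‖ξ(Φ)‖ ≤ 1. -/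

import Mathlib

open Metric Set Filter

noncomputable section

/-- `ℓ2` is the complex Hilbert space of square-summable sequences indexed by `ℕ`. -/
abbrev ℓ2 : Type := lp (fun _ : ℕ => ℂ) 2

/-- The open unit ball of `ℓ2`. -/
def oB : Set ℓ2 := Metric.ball 0 1

/-- The closed unit ball of `ℓ2`. -/
def cB : Set ℓ2 := Metric.closedBall 0 1

/-- The unit sphere of `ℓ2`. -/
def sph : Set ℓ2 := Metric.sphere 0 1

/-- The coordinate functional `x ↦ ⟨x, eₙ⟩ = xₙ` (inner ℂ product linear in the first variable). -/
def coord (n : ℕ) : ℓ2 → ℂ := fun x => x n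

/-- Supremum norm on the open unit ball, for scalar-valued functions. -/
def supNorm (f : ℓ2 → ℂ) : ℝ := ⨆ x : oB, ‖f (x : ℓ2)‖

/-- Supremum norm on the open unit ball, for `ℓ2`-valued functions. -/
def supNormV (g : ℓ2 → ℓ2) : ℝ := ⨆ x : oB, ‖g (x : ℓ2)‖

/-- Membership in `𝒜ᵤ(B)`: holomorphic on the open unit ball and uniformly continuous there. -/
def MemAu (f : ℓ2 → ℂ) : Prop :=
  DifferentiableOn ℂ f oB ∧ UniformContinuousOn f oB

/-- Membership in `ℋ^∞(B)`: holomorphic and bounded on the open unit ball. -/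
def MemHinf (f : ℓ2 → ℂ) : Prop :=
  DifferentiableOn ℂ f oB ∧ ∃ C, ∀ x ∈ oB, ‖f x‖ ≤ C

/-- Membership in `ℋ^∞(B,ℓ2)`: holomorphic and bounded on the open unit ball, `ℓ2`-valued. -/
def MemHinfV (g : ℓ2 → ℓ2) : Prop :=
  DifferentiableOn ℂ g oB ∧ ∃ C, ∀ x ∈ oB, ‖g x‖ ≤ C

/-- `fext` is (a representative of) the unique continuous extension `f̃` of `f` to the
closed unit ball. -/
def IsExt (f fext : ℓ2 → ℂ) : Prop :=
  ContinuousOn fext cB ∧ Set.EqOn fext f oB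

/-- An element of the scalar-valued spectrum `ℳᵤ(B)`: a nonzero continuous `ℂ`-algebra
homomorphism `𝒜ᵤ(B) → ℂ`, encoded as a map on representatives. -/
structure MuHom where
  toFun : (ℓ2 → ℂ) → ℂ
  map_add : ∀ f g, MemAu f → MemAu g → toFun (f + g) = toFun f + toFun g
  map_mul : ∀ f g, MemAu f → MemAu g → toFun (f * g) = toFun f * toFun g
  map_smul : ∀ (c : ℂ) (f), MemAu f → toFun (c • f) = c * toFun f
  respects : ∀ f g, MemAu f → MemAu g → Set.EqOn f g oB → toFun f = toFun g
  nonzero : ∃ f, MemAu f ∧ toFun f ≠ 0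
  cont : ∃ C, ∀ f, MemAu f → ‖toFun f‖ ≤ C * supNorm f

/-- An element of the vector-valued spectrum `ℳ_{u,∞}(B,B)`: a nonzero continuous `ℂ`-algebra
homomorphism `𝒜ᵤ(B) → ℋ^∞(B)`, encoded as a map on representatives. -/
structure MuInfHom where
  toFun : (ℓ2 → ℂ) → (ℓ2 → ℂ)
  maps_mem : ∀ f, MemAu f → MemHinf (toFun f)
  map_add : ∀ f g, MemAu f → MemAu g → ∀ x ∈ oB, toFun (f + g) x = toFun f x + toFun g x
  map_mul : ∀ f g, MemAu f → MemAu g → ∀ x ∈ oB, toFun (f * g) x = toFun f x * toFun g x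
  map_smul : ∀ (c : ℂ) (f), MemAu f → ∀ x ∈ oB, toFun (c • f) x = c * toFun f x
  respects : ∀ f g, MemAu f → MemAu g → Set.EqOn f g oB → Set.EqOn (toFun f) (toFun g) oB
  nonzero : ∃ f, MemAu f ∧ ∃ x ∈ oB, toFun f x ≠ 0
  cont : ∃ C, ∀ f, MemAu f → ∀ x ∈ oB, ‖toFun f x‖ ≤ C * supNorm f

/-- An element of the scalar-valued spectrum `ℳ_∞(B)`: a nonzero continuous `ℂ`-algebra
homomorphism `ℋ^∞(B) → ℂ`, encoded as a map on representatives. -/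
structure MInfHom where
  toFun : (ℓ2 → ℂ) → ℂ
  map_add : ∀ f g, MemHinf f → MemHinf g → toFun (f + g) = toFun f + toFun g
  map_mul : ∀ f g, MemHinf f → MemHinf g → toFun (f * g) = toFun f * toFun g
  map_smul : ∀ (c : ℂ) (f), MemHinf f → toFun (c • f) = c * toFun f
  respects : ∀ f g, MemHinf f → MemHinf g → Set.EqOn f g oB → toFun f = toFun g
  nonzero : ∃ f, MemHinf f ∧ toFun f ≠ 0
  cont : ∃ C, ∀ f, MemHinf f → ‖toFun f‖ ≤ C * supNorm f

/-- `ξ(Φ) = g`: the projection of `Φ` is the function `g`, i.e. `Φ(⟨·,eₙ⟩)(x) = g(x)ₙ`. -/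
def xiEq (Φ : MuInfHom) (g : ℓ2 → ℓ2) : Prop :=
  ∀ x ∈ oB, ∀ n : ℕ, Φ.toFun (coord n) x = g x n

/-- `Φ = C_g`: `Φ` is the composition homomorphism `f ↦ f̃ ∘ g`. -/
def IsCompHom (Φ : MuInfHom) (g : ℓ2 → ℓ2) : Prop :=
  ∀ f fext, MemAu f → IsExt f fext → ∀ x ∈ oB, Φ.toFun f x = fext (g x)

/-- The open unit ball of `ℋ^∞(B,ℓ2)`. -/
def ballHV : Set (ℓ2 → ℓ2) := {h | MemHinfV h ∧ supNormV h < 1}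

/-- The open unit ball of `ℋ^∞(B)`. -/
def ballH : Set (ℓ2 → ℂ) := {h | MemHinf h ∧ supNorm h < 1}

/-- `F` is holomorphic on the open unit ball of `ℋ^∞(B,ℓ2)`: it is locally bounded there and
`ℂ`-differentiable along every complex line (which, for maps on a ball of a Banach space, is
equivalent to Fréchet holomorphy). -/
def HolomorphicOnBallHV (F : (ℓ2 → ℓ2) → ℂ) : Prop :=
  (∀ h ∈ ballHV, ∃ ε > 0, ∃ C, ∀ k ∈ ballHV, supNormV (k - h) < ε → ‖F k‖ ≤ C) ∧
  (∀ h ∈ ballHV, ∀ k, MemHinfV k →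
    DifferentiableOn ℂ (fun z : ℂ => F (h + z • k)) {z : ℂ | (h + z • k) ∈ ballHV})

/-- `F` is holomorphic on the open unit ball of `ℋ^∞(B)`: it is locally bounded there and
`ℂ`-differentiable along every complex line. -/
def HolomorphicOnBallH (F : (ℓ2 → ℂ) → ℂ) : Prop :=
  (∀ h ∈ ballH, ∃ ε > 0, ∃ C, ∀ k ∈ ballH, supNorm (k - h) < ε → ‖F k‖ ≤ C) ∧
  (∀ h ∈ ballH, ∀ k, MemHinf k →
    DifferentiableOn ℂ (fun z : ℂ => F (h + z • k)) {z : ℂ | (h + z • k) ∈ ballH})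

/-- `h ∈ 𝒞ℓ(f,g)` (with `fext = f̃` the continuous extension of `f` to the closed ball):
there is a net `(g_α)` in the open unit ball of `ℋ^∞(B,ℓ2)` converging weak-star to `g`
(pointwise weak convergence of values) with `f̃(g_α(y)) → h(y)` for every `y ∈ B`. -/
def InCluster (fext : ℓ2 → ℂ) (g : ℓ2 → ℓ2) (h : ℓ2 → ℂ) : Prop :=
  ∃ (ι : Type) (l : Filter ι), l.NeBot ∧ ∃ gA : ι → ℓ2 → ℓ2,
    (∀ i, gA i ∈ ballHV) ∧
    (∀ y ∈ oB, ∀ u : ℓ2,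
      Filter.Tendsto (fun i => (inner ℂ (gA i y) u : ℂ)) l (nhds (inner ℂ (g y) u))) ∧
    (∀ y ∈ oB, Filter.Tendsto (fun i => fext (gA i y)) l (nhds (h y)))

section Aux

open ComplexConjugate

lemma zero_mem_oB : (0 : ℓ2) ∈ oB := by simp [oB]

lemma oB_open : IsOpen oB := isOpen_ball

instance : Nonempty oB := ⟨⟨0, zero_mem_oB⟩⟩

lemma norm_lt_one_of_mem_oB {x : ℓ2} (hx : x ∈ oB) : ‖x‖ < 1 := by
  simpa [oB] using hx

lemma supNorm_le {f : ℓ2 → ℂ} {M : ℝ} (h : ∀ x ∈ oB, ‖f x‖ ≤ M) : supNorm f ≤ M :=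
  ciSup_le fun x => h x x.2

lemma UniformContinuous.on {α β : Type*} [UniformSpace α] [UniformSpace β] {f : α → β}
    (h : UniformContinuous f) (s : Set α) : UniformContinuousOn f s :=
  h.mono_left inf_le_left

lemma memAu_clm (L : ℓ2 →L[ℂ] ℂ) : MemAu ⇑L :=
  ⟨L.differentiable.differentiableOn, L.uniformContinuous.on oB⟩

lemma memAu_one : MemAu (1 : ℓ2 → ℂ) := by
  constructor
  · exact (differentiable_const (1:ℂ)).differentiableOn
  · exact uniformContinuous_const.on oB

lemma pow_diff_bound {M : ℝ} (hM : 0 ≤ M) (k : ℕ) {z w : ℂ} (hz : ‖z‖ ≤ M) (hw : ‖w‖ ≤ M) :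
    ‖z ^ k - w ^ k‖ ≤ k * M ^ (k - 1) * ‖z - w‖ := by
  induction k with
  | zero => simp
  | succ k ih =>
    have key : z ^ (k+1) - w ^ (k+1) = z ^ k * (z - w) + (z ^ k - w ^ k) * w := by ring
    rw [key]
    calc ‖z ^ k * (z - w) + (z ^ k - w ^ k) * w‖
        ≤ ‖z ^ k * (z - w)‖ + ‖(z ^ k - w ^ k) * w‖ := norm_add_le _ _
      _ ≤ M ^ k * ‖z - w‖ + (k * M ^ (k-1) * ‖z - w‖) * M := by
          rw [norm_mul, norm_mul]
          refine add_le_add (mul_le_mul_of_nonneg_right ?_ (norm_nonneg _))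
            (mul_le_mul ih hw (norm_nonneg _) (by positivity))
          rw [norm_pow]
          exact pow_le_pow_left₀ (norm_nonneg _) hz k
      _ ≤ (k+1 : ℕ) * M ^ ((k+1) - 1) * ‖z - w‖ := by
          simp only [Nat.add_sub_cancel, Nat.cast_add, Nat.cast_one]
          rcases Nat.eq_zero_or_pos k with hk | hk
          · subst hk; simp
          · have h1 : M ^ (k-1) * M = M ^ k := by
              rw [← pow_succ]; congr 1; omega
            have h2 : (k : ℝ) * M ^ (k-1) * ‖z - w‖ * M = k * M ^ k * ‖z - w‖ := by
              rw [mul_right_comm, mul_assoc (k:ℝ) (M ^ (k-1)) M, h1]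
            rw [h2]
            exact le_of_eq (by ring)

lemma inner_bound_oB (v : ℓ2) {x : ℓ2} (hx : x ∈ oB) : ‖(inner ℂ v x : ℂ)‖ ≤ ‖v‖ := by
  calc ‖(inner ℂ v x : ℂ)‖ ≤ ‖v‖ * ‖x‖ := norm_inner_le_norm v x
    _ ≤ ‖v‖ * 1 := by
        have := (norm_lt_one_of_mem_oB hx).le
        gcongr
    _ = ‖v‖ := mul_one _

lemma memAu_innerPow (v : ℓ2) (k : ℕ) : MemAu (fun x : ℓ2 => (inner ℂ v x : ℂ) ^ k) := by
  constructor
  · have h1 : Differentiable ℂ (fun x : ℓ2 => (inner ℂ v x : ℂ)) := by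
      have : (fun x : ℓ2 => (inner ℂ v x : ℂ)) = ⇑(innerSL ℂ v) := rfl
      rw [this]; exact (innerSL ℂ v).differentiable
    exact (h1.pow k).differentiableOn
  · have hK : (0:ℝ) ≤ (k : ℝ) * ‖v‖ ^ (k-1) * ‖v‖ := by positivity
    apply LipschitzOnWith.uniformContinuousOn (K := Real.toNNReal ((k : ℝ) * ‖v‖ ^ (k-1) * ‖v‖))
    rw [lipschitzOnWith_iff_dist_le_mul]
    intro x hx y hy
    have h1 : ‖(inner ℂ v x : ℂ) ^ k - (inner ℂ v y : ℂ) ^ k‖ ≤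
        k * ‖v‖ ^ (k-1) * ‖(inner ℂ v x : ℂ) - (inner ℂ v y : ℂ)‖ :=
      pow_diff_bound (norm_nonneg v) k (inner_bound_oB v hx) (inner_bound_oB v hy)
    have h2 : ‖(inner ℂ v x : ℂ) - (inner ℂ v y : ℂ)‖ ≤ ‖v‖ * ‖x - y‖ := by
      rw [← inner_sub_right]
      exact norm_inner_le_norm v (x - y)
    rw [dist_eq_norm, dist_eq_norm, Real.coe_toNNReal _ hK]
    calc ‖(inner ℂ v x : ℂ) ^ k - (inner ℂ v y : ℂ) ^ k‖
        ≤ k * ‖v‖ ^ (k-1) * (‖v‖ * ‖x - y‖) :=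
          le_trans h1 (mul_le_mul_of_nonneg_left h2 (by positivity))
      _ = (k : ℝ) * ‖v‖ ^ (k-1) * ‖v‖ * ‖x - y‖ := by ring

end Aux

lemma oneDim {ψ : ℂ → ℂ} {R M : ℝ} (hR : 0 < R)
    (hd : DifferentiableOn ℂ ψ (Metric.ball 0 R))
    (hM : ∀ z ∈ Metric.ball (0:ℂ) R, ‖ψ z‖ ≤ M) :
    ‖deriv ψ 0‖ ≤ 3 * M / R ∧
      ∀ z : ℂ, ‖z‖ ≤ R / 2 → ‖ψ z - ψ 0 - z * deriv ψ 0‖ ≤ 8 * M / R ^ 2 * ‖z‖ ^ 2 := by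
  have hM0 : 0 ≤ M := le_trans (norm_nonneg _) (hM 0 (by simp [hR]))
  set ρ : ℝ := 3 * R / 4 with hρ
  have hρ0 : 0 < ρ := by positivity
  have hρR : ρ < R := by rw [hρ]; linarith
  have hsub : Metric.closedBall (0:ℂ) ρ ⊆ Metric.ball (0:ℂ) R :=
    fun z hz => lt_of_le_of_lt (Metric.mem_closedBall.1 hz) (by simpa using hρR)
  -- maximum modulus on closed ball of radius ρ from bound on the sphere
  have maxmod : ∀ g : ℂ → ℂ, DifferentiableOn ℂ g (Metric.ball 0 R) → ∀ C : ℝ,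
      (∀ z ∈ Metric.sphere (0:ℂ) ρ, ‖g z‖ ≤ C) →
      ∀ z ∈ Metric.closedBall (0:ℂ) ρ, ‖g z‖ ≤ C := by
    intro g hg C hC z hz
    have hdc : DiffContOnCl ℂ g (Metric.ball 0 ρ) := by
      refine DifferentiableOn.diffContOnCl ?_
      rw [closure_ball (0:ℂ) hρ0.ne']
      exact hg.mono hsub
    refine Complex.norm_le_of_forall_mem_frontier_norm_le isBounded_ball hdc ?_ ?_
    · rw [frontier_ball (0:ℂ) hρ0.ne']
      exact hC
    · rw [closure_ball (0:ℂ) hρ0.ne']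
      exact hz
  set g1 : ℂ → ℂ := dslope ψ 0 with hg1def
  have hg1 : DifferentiableOn ℂ g1 (Metric.ball 0 R) :=
    (Complex.differentiableOn_dslope (Metric.ball_mem_nhds _ hR)).mpr hd
  have hg1sphere : ∀ z ∈ Metric.sphere (0:ℂ) ρ, ‖g1 z‖ ≤ 2 * M / ρ := by
    intro z hz
    have hzρ : ‖z‖ = ρ := by simpa using hz
    have hzne : z ≠ 0 := by
      intro h; rw [h] at hzρ; simp at hzρ; exact hρ0.ne' hzρ.symm
    have hzball : z ∈ Metric.ball (0:ℂ) R := by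
      simp only [Metric.mem_ball, dist_zero_right]; rw [hzρ]; exact hρR
    rw [hg1def, dslope_of_ne _ hzne, slope_def_module, norm_smul, norm_inv, sub_zero, hzρ]
    rw [div_eq_inv_mul]
    gcongr
    calc ‖ψ z - ψ 0‖ ≤ ‖ψ z‖ + ‖ψ 0‖ := norm_sub_le _ _
      _ ≤ M + M := add_le_add (hM z hzball) (hM 0 (by simp [hR]))
      _ = 2 * M := by ring
  have hg1cb : ∀ z ∈ Metric.closedBall (0:ℂ) ρ, ‖g1 z‖ ≤ 2 * M / ρ :=
    maxmod g1 hg1 _ hg1sphere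
  have hderiv : ‖deriv ψ 0‖ ≤ 2 * M / ρ := by
    have h0 : g1 0 = deriv ψ 0 := dslope_same ψ 0
    rw [← h0]
    exact hg1cb 0 (by simp [hρ0.le])
  constructor
  · calc ‖deriv ψ 0‖ ≤ 2 * M / ρ := hderiv
      _ ≤ 3 * M / R := by
        rw [hρ, div_le_div_iff₀ (by positivity) hR]
        nlinarith
  · set g2 : ℂ → ℂ := dslope g1 0 with hg2def
    have hg2 : DifferentiableOn ℂ g2 (Metric.ball 0 R) :=
      (Complex.differentiableOn_dslope (Metric.ball_mem_nhds _ hR)).mpr hg1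
    have hg2sphere : ∀ z ∈ Metric.sphere (0:ℂ) ρ, ‖g2 z‖ ≤ 8 * M / R ^ 2 := by
      intro z hz
      have hzρ : ‖z‖ = ρ := by simpa using hz
      have hzne : z ≠ 0 := by
        intro h; rw [h] at hzρ; simp at hzρ; exact hρ0.ne' hzρ.symm
      have hzcb : z ∈ Metric.closedBall (0:ℂ) ρ := by
        rw [Metric.mem_closedBall, dist_zero_right, hzρ]
      rw [hg2def, dslope_of_ne _ hzne, slope_def_module, norm_smul, norm_inv, sub_zero, hzρ]
      have hb : ‖g1 z - g1 0‖ ≤ 2 * M / ρ + 2 * M / ρ :=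
        le_trans (norm_sub_le _ _) (add_le_add (hg1cb z hzcb) (hg1cb 0 (by simp [hρ0.le])))
      calc ρ⁻¹ * ‖g1 z - g1 0‖ ≤ ρ⁻¹ * (2 * M / ρ + 2 * M / ρ) := by gcongr
        _ = 4 * M / ρ ^ 2 := by field_simp; ring
        _ ≤ 8 * M / R ^ 2 := by
          rw [hρ, div_le_div_iff₀ (by positivity) (by positivity)]
          nlinarith
    have hg2cb : ∀ z ∈ Metric.closedBall (0:ℂ) ρ, ‖g2 z‖ ≤ 8 * M / R ^ 2 :=
      maxmod g2 hg2 _ hg2sphere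
    intro z hzR
    have hzcb : z ∈ Metric.closedBall (0:ℂ) ρ := by
      simp only [Metric.mem_closedBall, dist_zero_right]
      rw [hρ]; linarith
    have key : ψ z - ψ 0 - z * deriv ψ 0 = z ^ 2 * g2 z := by
      rcases eq_or_ne z 0 with rfl | hz0
      · simp
      · rw [hg2def, dslope_of_ne _ hz0, slope_def_module, sub_zero, hg1def,
          dslope_of_ne _ hz0, slope_def_module, sub_zero, dslope_same]
        simp only [smul_eq_mul]
        field_simp
    rw [key, norm_mul, norm_pow]
    rw [mul_comm (8 * M / R ^ 2) (‖z‖^2)]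
    gcongr
    exact hg2cb z hzcb

section PhiAlg

open ComplexConjugate

lemma coord_eq_inner : ∀ n : ℕ, coord n = fun y : ℓ2 => (inner ℂ (lp.single 2 n (1:ℂ)) y : ℂ) := by
  intro n
  funext y
  rw [lp.inner_single_left]
  simp [coord, RCLike.inner_apply]

lemma memAu_coord (n : ℕ) : MemAu (coord n) := by
  rw [coord_eq_inner n]
  have : (fun y : ℓ2 => (inner ℂ (lp.single 2 n (1:ℂ)) y : ℂ)) = ⇑(innerSL ℂ (lp.single 2 n (1:ℂ))) := rfl
  rw [this]
  exact memAu_clm _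

lemma memAu_finsum (s : Finset ℕ) (c : ℕ → ℂ) :
    MemAu (fun y : ℓ2 => ∑ n ∈ s, c n * y n) := by
  classical
  have : (fun y : ℓ2 => ∑ n ∈ s, c n * y n) =
      ⇑(∑ n ∈ s, c n • innerSL ℂ (lp.single 2 n (1:ℂ))) := by
    funext y
    rw [ContinuousLinearMap.sum_apply]
    refine Finset.sum_congr rfl fun n _ => ?_
    rw [ContinuousLinearMap.smul_apply, smul_eq_mul]
    congr 1
    have := congrFun (coord_eq_inner n) y
    simpa [coord] using this
  rw [this]
  exact memAu_clm _

variable (Φ : MuInfHom)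

lemma phi_one : ∀ x ∈ oB, Φ.toFun 1 x = 1 := by
  intro x hx
  -- h := Φ.toFun 1 takes values in {0,1} and is continuous on the connected set oB
  have hmem : MemHinf (Φ.toFun 1) := Φ.maps_mem 1 memAu_one
  have hc : ContinuousOn (Φ.toFun 1) oB := hmem.1.continuousOn
  have hval : ∀ y ∈ oB, Φ.toFun 1 y = 0 ∨ Φ.toFun 1 y = 1 := by
    intro y hy
    have h2 : Φ.toFun (1 * 1) y = Φ.toFun 1 y * Φ.toFun 1 y :=
      Φ.map_mul 1 1 memAu_one memAu_one y hy
    rw [mul_one] at h2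
    have : Φ.toFun 1 y * (Φ.toFun 1 y - 1) = 0 := by linear_combination -h2
    rcases mul_eq_zero.1 this with h | h
    · exact Or.inl h
    · exact Or.inr (sub_eq_zero.mp h)
  -- there is a point where the value is 1
  obtain ⟨f0, hf0, x0, hx0, hne⟩ := Φ.nonzero
  have hx01 : Φ.toFun 1 x0 = 1 := by
    have h2 : Φ.toFun (f0 * 1) x0 = Φ.toFun f0 x0 * Φ.toFun 1 x0 :=
      Φ.map_mul f0 1 hf0 memAu_one x0 hx0
    rw [mul_one] at h2
    exact (mul_left_cancel₀ hne (by rw [mul_one]; exact h2)).symm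
  -- connectedness argument
  have hpre : IsPreconnected (Φ.toFun 1 '' oB) :=
    ((convex_ball (0:ℓ2) 1).isPreconnected).image _ hc
  have hsub : Φ.toFun 1 '' oB ⊆ Metric.ball (0:ℂ) (1/2) ∪ Metric.ball (1:ℂ) (1/2) := by
    rintro _ ⟨y, hy, rfl⟩
    rcases hval y hy with h | h
    · left; rw [h]; simp
    · right; rw [h]; simp
  have hdisj : Disjoint (Metric.ball (0:ℂ) (1/2)) (Metric.ball (1:ℂ) (1/2)) := by
    rw [Set.disjoint_left]
    intro z hz0 hz1
    rw [Metric.mem_ball] at hz0 hz1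
    have : dist (0:ℂ) 1 ≤ dist z 0 + dist z 1 := dist_triangle_left _ _ _
    rw [show dist (0:ℂ) 1 = 1 by simp] at this
    linarith
  rcases hpre.subset_or_subset isOpen_ball isOpen_ball hdisj hsub with h | h
  · exfalso
    have := h ⟨x0, hx0, rfl⟩
    rw [hx01, Metric.mem_ball] at this
    simp at this
    linarith
  · have := h ⟨x, hx, rfl⟩
    rcases hval x hx with h0 | h1
    · exfalso
      rw [h0, Metric.mem_ball] at this
      simp at this
      linarith
    · exact h1

lemma phi_zero : ∀ x ∈ oB, Φ.toFun 0 x = 0 := by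
  intro x hx
  have h := Φ.map_smul 0 1 memAu_one x hx
  rw [zero_smul] at h
  rw [h, zero_mul]

lemma phi_finsum (s : Finset ℕ) (c : ℕ → ℂ) : ∀ x ∈ oB,
    Φ.toFun (fun y : ℓ2 => ∑ n ∈ s, c n * y n) x = ∑ n ∈ s, c n * Φ.toFun (coord n) x := by
  classical
  induction s using Finset.induction with
  | empty =>
    intro x hx
    have : (fun _ : ℓ2 => ∑ n ∈ (∅ : Finset ℕ), c n * (0:ℂ)) = (0 : ℓ2 → ℂ) := by
      funext y; simp
    simp only [Finset.sum_empty]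
    have h0 : (fun _ : ℓ2 => (0:ℂ)) = (0 : ℓ2 → ℂ) := rfl
    rw [h0, phi_zero Φ x hx]
  | insert m s' hm ih =>
    intro x hx
    have hsplit : (fun y : ℓ2 => ∑ n ∈ insert m s', c n * y n) =
        (fun y : ℓ2 => c m * y m) + (fun y : ℓ2 => ∑ n ∈ s', c n * y n) := by
      funext y
      rw [Finset.sum_insert hm]
      rfl
    have h1 : (fun y : ℓ2 => c m * y m) = c m • coord m := by
      funext y; simp [coord, Pi.smul_apply, smul_eq_mul]
    have hMem1 : MemAu (fun y : ℓ2 => c m * y m) := by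
      have := memAu_finsum ({m} : Finset ℕ) c
      simpa using this
    rw [hsplit, Φ.map_add _ _ hMem1 (memAu_finsum s' c) x hx, Finset.sum_insert hm,
      ih x hx, h1, Φ.map_smul (c m) (coord m) (memAu_coord m) x hx]

lemma phi_pow (v : ℓ2) (k : ℕ) : ∀ x ∈ oB,
    Φ.toFun (fun y : ℓ2 => (inner ℂ v y : ℂ) ^ k) x =
      (Φ.toFun (fun y : ℓ2 => (inner ℂ v y : ℂ)) x) ^ k := by
  induction k with
  | zero =>
    intro x hx
    have : (fun _ : ℓ2 => (1:ℂ)) = (1 : ℓ2 → ℂ) := rfl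
    simp only [pow_zero]
    rw [this, phi_one Φ x hx]
  | succ k ih =>
    intro x hx
    have hsplit : (fun y : ℓ2 => (inner ℂ v y : ℂ) ^ (k+1)) =
        (fun y : ℓ2 => (inner ℂ v y : ℂ) ^ k) * (fun y : ℓ2 => (inner ℂ v y : ℂ)) := by
      funext y; rw [Pi.mul_apply, pow_succ]
    rw [hsplit, Φ.map_mul _ _ (memAu_innerPow v k) (by simpa using memAu_innerPow v 1) x hx,
      ih x hx, pow_succ]

lemma phi_inner_norm_le (v : ℓ2) : ∀ x ∈ oB,
    ‖Φ.toFun (fun y : ℓ2 => (inner ℂ v y : ℂ)) x‖ ≤ ‖v‖ := by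
  intro x hx
  obtain ⟨C, hC⟩ := Φ.cont
  set t := ‖Φ.toFun (fun y : ℓ2 => (inner ℂ v y : ℂ)) x‖ with ht
  have ht0 : 0 ≤ t := norm_nonneg _
  have hk : ∀ k : ℕ, t ^ k ≤ C * ‖v‖ ^ k := by
    intro k
    have h1 : supNorm (fun y : ℓ2 => (inner ℂ v y : ℂ) ^ k) ≤ ‖v‖ ^ k := by
      apply supNorm_le
      intro y hy
      rw [norm_pow]
      exact pow_le_pow_left₀ (norm_nonneg _) (inner_bound_oB v hy) k
    calc t ^ k = ‖(Φ.toFun (fun y : ℓ2 => (inner ℂ v y : ℂ)) x) ^ k‖ := by rw [norm_pow]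
      _ = ‖Φ.toFun (fun y : ℓ2 => (inner ℂ v y : ℂ) ^ k) x‖ := by rw [phi_pow Φ v k x hx]
      _ ≤ C * supNorm (fun y : ℓ2 => (inner ℂ v y : ℂ) ^ k) := hC _ (memAu_innerPow v k) x hx
      _ ≤ C * ‖v‖ ^ k := by
        have hC0 : 0 ≤ C := by
          have := hC 1 memAu_one x hx
          have h1 : supNorm (1 : ℓ2 → ℂ) = 1 := by
            have : ∀ y : oB, ‖(1 : ℓ2 → ℂ) (y:ℓ2)‖ = 1 := fun y => by simp [Pi.one_apply]
            rw [supNorm]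
            rw [show (fun y : oB => ‖(1 : ℓ2 → ℂ) (y:ℓ2)‖) = fun _ : oB => (1:ℝ) from funext this]
            exact ciSup_const
          rw [phi_one Φ x hx, h1, mul_one] at this
          simpa using le_trans (by norm_num) this
        gcongr
  by_contra hlt
  push_neg at hlt
  rcases eq_or_lt_of_le (norm_nonneg v) with hv0 | hv0
  · have := hk 1
    rw [pow_one, pow_one, ← hv0, mul_zero] at this
    have : t = 0 := le_antisymm this ht0
    rw [this, ← hv0] at hlt
    exact lt_irrefl _ hlt
  · have hq : 1 < t / ‖v‖ := (one_lt_div hv0).mpr hlt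
    obtain ⟨k, hkC⟩ := pow_unbounded_of_one_lt C hq
    have := hk k
    rw [div_pow] at hkC
    rw [lt_div_iff₀ (by positivity)] at hkC
    linarith

end PhiAlg

section GmapSec

open ComplexConjugate
open scoped ENNReal NNReal

variable (Φ : MuInfHom)

lemma sq_sum_le_one : ∀ x ∈ oB, ∀ s : Finset ℕ,
    ∑ n ∈ s, ‖Φ.toFun (coord n) x‖ ^ 2 ≤ 1 := by
  intro x hx s
  classical
  set a : ℕ → ℂ := fun n => Φ.toFun (coord n) x with ha
  set v : ℓ2 := ∑ n ∈ s, lp.single 2 n (a n) with hvdef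
  set S : ℝ := ∑ n ∈ s, ‖a n‖ ^ 2 with hS
  have hS0 : 0 ≤ S := Finset.sum_nonneg fun n _ => sq_nonneg _
  have hv : ∀ y : ℓ2, (inner ℂ v y : ℂ) = ∑ n ∈ s, conj (a n) * y n := by
    intro y
    rw [hvdef, sum_inner]
    refine Finset.sum_congr rfl fun n _ => ?_
    rw [lp.inner_single_left]
    simp [RCLike.inner_apply, mul_comm]
  have hvapp : ∀ n ∈ s, v n = a n := by
    intro n hn
    rw [hvdef]
    rw [lp.coeFn_sum, Finset.sum_apply]
    simp [lp.single_apply, Pi.single_apply, hn]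
  have hconj : ∀ z : ℂ, conj z * z = ((‖z‖ ^ 2 : ℝ) : ℂ) := by
    intro z
    rw [mul_comm, Complex.mul_conj, Complex.normSq_eq_norm_sq]
  have hsum : ∑ n ∈ s, conj (a n) * a n = ((S : ℝ) : ℂ) := by
    rw [hS]
    push_cast
    exact Finset.sum_congr rfl fun n _ => by rw [hconj]; push_cast; ring
  have hPhiv : Φ.toFun (fun y : ℓ2 => (inner ℂ v y : ℂ)) x = ((S : ℝ) : ℂ) := by
    have heq : (fun y : ℓ2 => (inner ℂ v y : ℂ)) =
        (fun y : ℓ2 => ∑ n ∈ s, conj (a n) * y n) := funext hv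
    rw [heq, phi_finsum Φ s (fun n => conj (a n)) x hx, ← hsum]
  have hSlev : S ≤ ‖v‖ := by
    have := phi_inner_norm_le Φ v x hx
    rw [hPhiv] at this
    rwa [Complex.norm_real, Real.norm_eq_abs, abs_of_nonneg hS0] at this
  have hv2 : ‖v‖ ^ 2 = S := by
    have h1 : (inner ℂ v v : ℂ) = ((S : ℝ) : ℂ) := by
      rw [hv v]
      rw [← hsum]
      exact Finset.sum_congr rfl fun n hn => by rw [hvapp n hn]
    have h2 := @inner_self_eq_norm_sq ℂ _ _ _ _ v
    rw [h1] at h2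
    simpa using h2.symm
  nlinarith [sq_nonneg (‖v‖ - 1), norm_nonneg v]

lemma memlp : ∀ x ∈ oB, Memℓp (fun n : ℕ => Φ.toFun (coord n) x) 2 := by
  intro x hx
  apply memℓp_gen
  have h2 : ((2:ℝ≥0∞)).toReal = ((2:ℕ):ℝ) := by simp
  rw [h2]
  simp only [Real.rpow_natCast]
  exact summable_of_sum_le (fun n => by positivity) (fun u => sq_sum_le_one Φ x hx u)

open Classical in
def Gmap : ℓ2 → ℓ2 := fun x =>
  if h : x ∈ oB then (⟨fun n => Φ.toFun (coord n) x, memlp Φ x h⟩ : lp (fun _ : ℕ => ℂ) 2)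
  else 0

lemma Gmap_apply {x : ℓ2} (hx : x ∈ oB) (n : ℕ) : Gmap Φ x n = Φ.toFun (coord n) x := by
  rw [Gmap, dif_pos hx]

lemma Gmap_norm_le {x : ℓ2} (hx : x ∈ oB) : ‖Gmap Φ x‖ ≤ 1 := by
  have hpos : (0:ℝ) < ((2:ℝ≥0∞)).toReal := by simp
  have h := lp.norm_rpow_eq_tsum hpos (Gmap Φ x)
  have h2 : ((2:ℝ≥0∞)).toReal = ((2:ℕ):ℝ) := by simp
  rw [h2] at h
  simp only [Real.rpow_natCast] at h
  have hsummable : Summable fun n : ℕ => ‖Gmap Φ x n‖ ^ (2:ℕ) := by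
    have hmem := memlp Φ x hx
    rw [memℓp_gen_iff hpos] at hmem
    rw [h2] at hmem
    simp only [Real.rpow_natCast] at hmem
    apply hmem.congr
    intro n
    rw [Gmap_apply Φ hx]
  have hts : (∑' n : ℕ, ‖Gmap Φ x n‖ ^ (2:ℕ)) ≤ 1 := by
    apply Summable.tsum_le_of_sum_le hsummable
    intro u
    calc ∑ n ∈ u, ‖Gmap Φ x n‖ ^ 2 = ∑ n ∈ u, ‖Φ.toFun (coord n) x‖ ^ 2 :=
          Finset.sum_congr rfl fun n _ => by rw [Gmap_apply Φ hx]
      _ ≤ 1 := sq_sum_le_one Φ x hx u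
  nlinarith [norm_nonneg (Gmap Φ x), h]

lemma phi_inner_eq (u : ℓ2) : ∀ x ∈ oB,
    Φ.toFun (fun y : ℓ2 => (inner ℂ u y : ℂ)) x = (inner ℂ u (Gmap Φ x) : ℂ) := by
  intro x hx
  classical
  set a : ℕ → ℂ := fun n => Φ.toFun (coord n) x with ha
  set v : Finset ℕ → ℓ2 := fun s => ∑ n ∈ s, lp.single 2 n (u n) with hvdef
  have hvs : ∀ s : Finset ℕ, Φ.toFun (fun y : ℓ2 => (inner ℂ (v s) y : ℂ)) x
      = (inner ℂ (v s) (Gmap Φ x) : ℂ) := by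
    intro s
    have hv : ∀ y : ℓ2, (inner ℂ (v s) y : ℂ) = ∑ n ∈ s, conj (u n) * y n := by
      intro y
      rw [hvdef, sum_inner]
      refine Finset.sum_congr rfl fun n _ => ?_
      rw [lp.inner_single_left]
      simp [RCLike.inner_apply, mul_comm]
    have h1 : Φ.toFun (fun y : ℓ2 => (inner ℂ (v s) y : ℂ)) x
        = ∑ n ∈ s, conj (u n) * (Gmap Φ x n) := by
      rw [funext hv, phi_finsum Φ s (fun n => conj (u n)) x hx]
      exact Finset.sum_congr rfl fun n _ => by rw [Gmap_apply Φ hx]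
    rw [h1, hv (Gmap Φ x)]
  -- v s → u
  have hS : Filter.Tendsto v Filter.atTop (nhds u) :=
    (lp.hasSum_single ENNReal.ofNat_ne_top u : HasSum _ u)
  -- LHS tendsto
  have hdiff : ∀ s : Finset ℕ,
      ‖Φ.toFun (fun y : ℓ2 => (inner ℂ u y : ℂ)) x
        - Φ.toFun (fun y : ℓ2 => (inner ℂ (v s) y : ℂ)) x‖ ≤ ‖u - v s‖ := by
    intro s
    have hsplit : (fun y : ℓ2 => (inner ℂ u y : ℂ)) =
        (fun y : ℓ2 => (inner ℂ (u - v s) y : ℂ)) + (fun y : ℓ2 => (inner ℂ (v s) y : ℂ)) := by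
      funext y
      rw [Pi.add_apply, ← inner_add_left, sub_add_cancel]
    have hm1 : MemAu (fun y : ℓ2 => (inner ℂ (u - v s) y : ℂ)) := by
      simpa using memAu_innerPow (u - v s) 1
    have hm2 : MemAu (fun y : ℓ2 => (inner ℂ (v s) y : ℂ)) := by
      simpa using memAu_innerPow (v s) 1
    rw [hsplit, Φ.map_add _ _ hm1 hm2 x hx]
    rw [add_sub_cancel_right]
    exact phi_inner_norm_le Φ (u - v s) x hx
  have hnorm0 : Filter.Tendsto (fun s => ‖u - v s‖) Filter.atTop (nhds 0) := by
    have : Filter.Tendsto (fun s => u - v s) Filter.atTop (nhds (u - u)) :=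
      Filter.Tendsto.sub tendsto_const_nhds hS
    rw [sub_self] at this
    simpa using this.norm
  have hL : Filter.Tendsto (fun s => Φ.toFun (fun y : ℓ2 => (inner ℂ (v s) y : ℂ)) x)
      Filter.atTop (nhds (Φ.toFun (fun y : ℓ2 => (inner ℂ u y : ℂ)) x)) := by
    rw [tendsto_iff_norm_sub_tendsto_zero]
    apply squeeze_zero (fun s => norm_nonneg _) (fun s => ?_) hnorm0
    rw [norm_sub_rev]
    exact hdiff s
  have hR : Filter.Tendsto (fun s => (inner ℂ (v s) (Gmap Φ x) : ℂ))
      Filter.atTop (nhds (inner ℂ u (Gmap Φ x))) :=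
    Filter.Tendsto.inner hS tendsto_const_nhds
  have := tendsto_nhds_unique hL (by rw [show (fun s => Φ.toFun (fun y : ℓ2 => (inner ℂ (v s) y : ℂ)) x) = fun s => (inner ℂ (v s) (Gmap Φ x) : ℂ) from funext hvs] ; exact hR)
  exact this

end GmapSec

section DiffSec

open ComplexConjugate
open scoped ENNReal

variable (Φ : MuInfHom)

set_option maxHeartbeats 2000000 in
lemma Gmap_diff : DifferentiableOn ℂ (Gmap Φ) oB := by
  intro x0 hx0
  set r : ℝ := 1 - ‖x0‖ with hrdef
  have hr : 0 < r := by
    have := norm_lt_one_of_mem_oB hx0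
    rw [hrdef]; linarith
  set φ : ℓ2 → ℓ2 → ℂ := fun u x => Φ.toFun (fun y : ℓ2 => (inner ℂ u y : ℂ)) x with hφ
  have hφd : ∀ u : ℓ2, DifferentiableOn ℂ (φ u) oB := by
    intro u
    have hmem : MemAu (fun y : ℓ2 => (inner ℂ u y : ℂ)) := by simpa using memAu_innerPow u 1
    exact (Φ.maps_mem _ hmem).1
  have hφb : ∀ u : ℓ2, ∀ x ∈ oB, ‖φ u x‖ ≤ ‖u‖ := by
    intro u x hx
    have h1 : φ u x = (inner ℂ u (Gmap Φ x) : ℂ) := phi_inner_eq Φ u x hx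
    rw [h1]
    calc ‖(inner ℂ u (Gmap Φ x) : ℂ)‖ ≤ ‖u‖ * ‖Gmap Φ x‖ := norm_inner_le_norm _ _
      _ ≤ ‖u‖ * 1 := by
          have := Gmap_norm_le Φ hx
          gcongr
      _ = ‖u‖ := mul_one _
  have hline : ∀ y : ℓ2, y ≠ 0 → ∀ z : ℂ, z ∈ Metric.ball (0:ℂ) (r / ‖y‖) →
      x0 + z • y ∈ oB := by
    intro y hy z hz
    rw [Metric.mem_ball, dist_zero_right] at hz
    have hy0 : 0 < ‖y‖ := norm_pos_iff.mpr hy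
    have hzy : ‖z‖ * ‖y‖ < r := (lt_div_iff₀ hy0).mp hz
    have h1 : ‖x0 + z • y‖ ≤ ‖x0‖ + ‖z‖ * ‖y‖ := by
      calc ‖x0 + z • y‖ ≤ ‖x0‖ + ‖z • y‖ := norm_add_le _ _
        _ = ‖x0‖ + ‖z‖ * ‖y‖ := by rw [norm_smul]
    have : ‖x0 + z • y‖ < 1 := by rw [hrdef] at hzy; linarith
    simpa [oB, Metric.mem_ball, dist_zero_right] using this
  have hψd : ∀ u y : ℓ2, y ≠ 0 →
      DifferentiableOn ℂ (fun z : ℂ => φ u (x0 + z • y)) (Metric.ball 0 (r / ‖y‖)) := by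
    intro u y hy
    have hinner : Differentiable ℂ (fun z : ℂ => x0 + z • y) :=
      (differentiable_id.smul_const y).const_add x0
    exact DifferentiableOn.comp (hφd u) hinner.differentiableOn
      (fun z hz => hline y hy z hz)
  have hDeriv : ∀ u y : ℓ2, HasDerivAt (fun z : ℂ => φ u (x0 + z • y))
      (fderiv ℂ (φ u) x0 y) 0 := by
    intro u y
    have hd : DifferentiableAt ℂ (φ u) x0 := (hφd u).differentiableAt (oB_open.mem_nhds hx0)
    have hline' : HasDerivAt (fun z : ℂ => x0 + z • y) y 0 := by
      simpa using ((hasDerivAt_id (0:ℂ)).smul_const y).const_add x0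
    have hf : HasFDerivAt (φ u) (fderiv ℂ (φ u) x0) ((fun z : ℂ => x0 + z • y) 0) := by
      simpa using hd.hasFDerivAt
    exact hf.comp_hasDerivAt 0 hline'
  have hDb : ∀ u y : ℓ2, ‖fderiv ℂ (φ u) x0 y‖ ≤ 3 * ‖u‖ / r * ‖y‖ := by
    intro u y
    rcases eq_or_ne y 0 with rfl | hy
    · simp
    · have hy0 : 0 < ‖y‖ := norm_pos_iff.mpr hy
      have hR : 0 < r / ‖y‖ := div_pos hr hy0
      obtain ⟨h1, _⟩ := oneDim hR (hψd u y hy) (fun z hz => hφb u _ (hline y hy z hz))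
      rw [(hDeriv u y).deriv] at h1
      calc ‖fderiv ℂ (φ u) x0 y‖ ≤ 3 * ‖u‖ / (r / ‖y‖) := h1
        _ = 3 * ‖u‖ / r * ‖y‖ := by field_simp
  have hQ : ∀ u y : ℓ2, ‖y‖ ≤ r / 2 →
      ‖φ u (x0 + y) - φ u x0 - fderiv ℂ (φ u) x0 y‖ ≤ 8 * ‖u‖ / r ^ 2 * ‖y‖ ^ 2 := by
    intro u y hyr
    rcases eq_or_ne y 0 with rfl | hy
    · simp
    · have hy0 : 0 < ‖y‖ := norm_pos_iff.mpr hy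
      have hR : 0 < r / ‖y‖ := div_pos hr hy0
      obtain ⟨_, h2⟩ := oneDim hR (hψd u y hy) (fun z hz => hφb u _ (hline y hy z hz))
      have h1le : ‖(1:ℂ)‖ ≤ (r / ‖y‖) / 2 := by
        rw [norm_one, le_div_iff₀ (by norm_num : (0:ℝ) < 2), le_div_iff₀ hy0]
        linarith
      have h3 := h2 1 h1le
      rw [(hDeriv u y).deriv] at h3
      simp only [one_smul, zero_smul, add_zero, norm_one, one_pow, mul_one, one_mul] at h3
      calc ‖φ u (x0 + y) - φ u x0 - fderiv ℂ (φ u) x0 y‖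
          ≤ 8 * ‖u‖ / (r / ‖y‖) ^ 2 := h3
        _ = 8 * ‖u‖ / r ^ 2 * ‖y‖ ^ 2 := by
            field_simp
  -- the candidate derivative via Riesz representation
  have hFy : ∀ y : ℓ2, ∃ w : ℓ2, (∀ u : ℓ2, (inner ℂ u w : ℂ) = fderiv ℂ (φ u) x0 y) ∧
      ‖w‖ ≤ 3 / r * ‖y‖ := by
    intro y
    have hDadd : ∀ u u' : ℓ2,
        fderiv ℂ (φ (u + u')) x0 = fderiv ℂ (φ u) x0 + fderiv ℂ (φ u') x0 := by
      intro u u'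
      have hm1 : MemAu (fun z : ℓ2 => (inner ℂ u z : ℂ)) := by simpa using memAu_innerPow u 1
      have hm2 : MemAu (fun z : ℓ2 => (inner ℂ u' z : ℂ)) := by simpa using memAu_innerPow u' 1
      have heq : Set.EqOn (φ (u + u')) (φ u + φ u') oB := by
        intro x hx
        have hsplit : (fun z : ℓ2 => (inner ℂ (u + u') z : ℂ)) =
            (fun z : ℓ2 => (inner ℂ u z : ℂ)) + (fun z : ℓ2 => (inner ℂ u' z : ℂ)) := by
          funext z
          rw [Pi.add_apply, ← inner_add_left]
        show Φ.toFun _ x = Φ.toFun _ x + Φ.toFun _ x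
        rw [hsplit]
        exact Φ.map_add _ _ hm1 hm2 x hx
      have hev : φ (u + u') =ᶠ[nhds x0] (φ u + φ u') :=
        heq.eventuallyEq_of_mem (oB_open.mem_nhds hx0)
      rw [hev.fderiv_eq]
      exact fderiv_add ((hφd u).differentiableAt (oB_open.mem_nhds hx0))
        ((hφd u').differentiableAt (oB_open.mem_nhds hx0))
    have hDsmul : ∀ (c : ℂ) (u : ℓ2),
        fderiv ℂ (φ (c • u)) x0 = conj c • fderiv ℂ (φ u) x0 := by
      intro c u
      have hm1 : MemAu (fun z : ℓ2 => (inner ℂ u z : ℂ)) := by simpa using memAu_innerPow u 1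
      have heq : Set.EqOn (φ (c • u)) (fun x => conj c • φ u x) oB := by
        intro x hx
        have hsplit : (fun z : ℓ2 => (inner ℂ (c • u) z : ℂ)) =
            (conj c) • (fun z : ℓ2 => (inner ℂ u z : ℂ)) := by
          funext z
          rw [Pi.smul_apply, smul_eq_mul, inner_smul_left]
        show Φ.toFun _ x = conj c • Φ.toFun _ x
        rw [hsplit, Φ.map_smul (conj c) _ hm1 x hx]
        rfl
      have hev : φ (c • u) =ᶠ[nhds x0] (fun x => conj c • φ u x) :=
        heq.eventuallyEq_of_mem (oB_open.mem_nhds hx0)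
      rw [hev.fderiv_eq]
      exact fderiv_const_smul ((hφd u).differentiableAt (oB_open.mem_nhds hx0)) (conj c)
    set F : ℓ2 →ₗ[ℂ] ℂ :=
      { toFun := fun u => conj (fderiv ℂ (φ u) x0 y)
        map_add' := by
          intro u u'
          show conj (fderiv ℂ (φ (u + u')) x0 y) =
            conj (fderiv ℂ (φ u) x0 y) + conj (fderiv ℂ (φ u') x0 y)
          rw [hDadd u u', ContinuousLinearMap.add_apply, map_add]
        map_smul' := by
          intro c u
          show conj (fderiv ℂ (φ (c • u)) x0 y) =
            (RingHom.id ℂ) c • conj (fderiv ℂ (φ u) x0 y)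
          rw [hDsmul c u]
          simp } with hFdef
    have hFb : ∀ u : ℓ2, ‖F u‖ ≤ (3 / r * ‖y‖) * ‖u‖ := by
      intro u
      have : ‖F u‖ = ‖fderiv ℂ (φ u) x0 y‖ := by
        rw [hFdef]
        exact RCLike.norm_conj _
      rw [this]
      calc ‖fderiv ℂ (φ u) x0 y‖ ≤ 3 * ‖u‖ / r * ‖y‖ := hDb u y
        _ = (3 / r * ‖y‖) * ‖u‖ := by ring
    set Fc : ℓ2 →L[ℂ] ℂ := LinearMap.mkContinuous F (3 / r * ‖y‖) hFb with hFcdef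
    refine ⟨(InnerProductSpace.toDual ℂ ℓ2).symm Fc, ?_, ?_⟩
    · intro u
      have h1 : (inner ℂ ((InnerProductSpace.toDual ℂ ℓ2).symm Fc) u : ℂ) = Fc u :=
        InnerProductSpace.toDual_symm_apply
      have h2 : (inner ℂ u ((InnerProductSpace.toDual ℂ ℓ2).symm Fc) : ℂ) = conj (Fc u) := by
        rw [← inner_conj_symm, h1]
      rw [h2]
      have h3 : Fc u = conj (fderiv ℂ (φ u) x0 y) := rfl
      rw [h3]
      exact Complex.conj_conj _
    · have h4 : ‖(InnerProductSpace.toDual ℂ ℓ2).symm Fc‖ = ‖Fc‖ :=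
        LinearIsometryEquiv.norm_map _ _
      rw [h4]
      exact LinearMap.mkContinuous_norm_le F (by positivity) hFb
  choose w hw1 hw2 using hFy
  have hwadd : ∀ y y' : ℓ2, w (y + y') = w y + w y' := by
    intro y y'
    refine ext_inner_left ℂ fun u => ?_
    rw [hw1, inner_add_right, hw1, hw1, ContinuousLinearMap.map_add]
  have hwsmul : ∀ (c : ℂ) (y : ℓ2), w (c • y) = c • w y := by
    intro c y
    refine ext_inner_left ℂ fun u => ?_
    rw [hw1, inner_smul_right, hw1, ContinuousLinearMap.map_smul]
    rfl
  set T : ℓ2 →L[ℂ] ℓ2 := LinearMap.mkContinuous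
    { toFun := w, map_add' := hwadd, map_smul' := by
        intro c y
        show w (c • y) = (RingHom.id ℂ) c • w y
        rw [hwsmul]
        rfl }
    (3 / r) (fun y => by
      calc ‖w y‖ ≤ 3 / r * ‖y‖ := hw2 y
        _ = 3 / r * ‖y‖ := rfl) with hTdef
  have hTapp : ∀ y : ℓ2, T y = w y := fun y => rfl
  -- the quadratic estimate for the vector-valued remainder
  have hEst : ∀ y : ℓ2, ‖y‖ ≤ r / 2 →
      ‖Gmap Φ (x0 + y) - Gmap Φ x0 - T y‖ ≤ 8 / r ^ 2 * ‖y‖ ^ 2 := by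
    intro y hyr
    have hmem : x0 + y ∈ oB := by
      have h1 : ‖x0 + y‖ ≤ ‖x0‖ + ‖y‖ := norm_add_le _ _
      have h2 : ‖x0 + y‖ < 1 := by rw [hrdef] at hyr; linarith
      simpa [oB, Metric.mem_ball, dist_zero_right] using h2
    set wv : ℓ2 := Gmap Φ (x0 + y) - Gmap Φ x0 - T y with hwv
    have hinner : ∀ u : ℓ2, (inner ℂ u wv : ℂ) =
        φ u (x0 + y) - φ u x0 - fderiv ℂ (φ u) x0 y := by
      intro u
      rw [hwv, inner_sub_right, inner_sub_right, hTapp, hw1]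
      rw [← phi_inner_eq Φ u _ hmem, ← phi_inner_eq Φ u x0 hx0]
    rcases eq_or_lt_of_le (norm_nonneg wv) with h0 | h0
    · rw [← h0]
      positivity
    · have hre : ‖wv‖ ^ 2 ≤ ‖(inner ℂ wv wv : ℂ)‖ := by
        have h1 := @inner_self_eq_norm_sq ℂ _ _ _ _ wv
        rw [← h1]
        exact Complex.re_le_norm _
      have h2 : ‖(inner ℂ wv wv : ℂ)‖ ≤ 8 * ‖wv‖ / r ^ 2 * ‖y‖ ^ 2 := by
        rw [hinner wv]
        exact hQ wv y hyr
      have h3 : ‖wv‖ * ‖wv‖ ≤ (8 / r ^ 2 * ‖y‖ ^ 2) * ‖wv‖ := by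
        have := le_trans hre h2
        calc ‖wv‖ * ‖wv‖ = ‖wv‖ ^ 2 := (sq _).symm
          _ ≤ 8 * ‖wv‖ / r ^ 2 * ‖y‖ ^ 2 := this
          _ = (8 / r ^ 2 * ‖y‖ ^ 2) * ‖wv‖ := by ring
      exact le_of_mul_le_mul_right h3 h0
  have hT : HasFDerivAt (Gmap Φ) T x0 := by
    rw [hasFDerivAt_iff_isLittleO_nhds_zero, Asymptotics.isLittleO_iff]
    intro c hc
    have hmin : 0 < min (r / 2) (c * r ^ 2 / 8) := by positivity
    filter_upwards [Metric.closedBall_mem_nhds (0:ℓ2) hmin] with y hy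
    rw [Metric.mem_closedBall, dist_zero_right] at hy
    have hy1 : ‖y‖ ≤ r / 2 := le_trans hy (min_le_left _ _)
    have hy2 : ‖y‖ ≤ c * r ^ 2 / 8 := le_trans hy (min_le_right _ _)
    calc ‖Gmap Φ (x0 + y) - Gmap Φ x0 - T y‖ ≤ 8 / r ^ 2 * ‖y‖ ^ 2 := hEst y hy1
      _ = (8 / r ^ 2 * ‖y‖) * ‖y‖ := by ring
      _ ≤ c * ‖y‖ := by
          have h5 : 8 / r ^ 2 * ‖y‖ ≤ c := by
            calc 8 / r ^ 2 * ‖y‖ ≤ 8 / r ^ 2 * (c * r ^ 2 / 8) := by gcongr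
              _ = c := by field_simp
          exact mul_le_mul_of_nonneg_right h5 (norm_nonneg _)
  exact hT.differentiableAt.differentiableWithinAt

end DiffSec

/-- for `Φ ∈ ℳ_{u,∞}(B,B)`: (i) `Φ(1) = 1` and each `δ_x ∘ Φ` belongs to
`ℳᵤ(B)`; (ii) for each `x ∈ B` the sequence `(Φ(⟨·,eₙ⟩)(x))ₙ` is square-summable (and is
`π(δ_x ∘ Φ)` by definition); (iii) `ξ(Φ)` is holomorphic on `B` with values in the closed
unit ball of `ℓ2`, i.e. `ξ(Φ) ∈ ℋ^∞(B,ℓ2)` with `‖ξ(Φ)‖ ≤ 1`. -/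
theorem stmt18 (Φ : MuInfHom) :
    -- (i) Φ(1) = 1 and δ_x ∘ Φ ∈ ℳᵤ(B)
    (∀ x ∈ oB, Φ.toFun 1 x = 1) ∧
    (∀ x ∈ oB, ∃ φ : MuHom, ∀ f, MemAu f → φ.toFun f = Φ.toFun f x) ∧
    -- (ii) the sequence (Φ(⟨·,eₙ⟩)(x))ₙ belongs to ℓ2
    (∀ x ∈ oB, Memℓp (fun n : ℕ => Φ.toFun (coord n) x) 2) ∧
    -- (iii) ξ(Φ) is holomorphic on B, bounded by 1
    (∃ G : ℓ2 → ℓ2, DifferentiableOn ℂ G oB ∧ (∀ x ∈ oB, ‖G x‖ ≤ 1) ∧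
      ∀ x ∈ oB, ∀ n : ℕ, G x n = Φ.toFun (coord n) x) := by
  refine ⟨phi_one Φ, ?_, memlp Φ,
    ⟨Gmap Φ, Gmap_diff Φ, fun x hx => Gmap_norm_le Φ hx, fun x hx n => Gmap_apply Φ hx n⟩⟩
  intro x hx
  refine ⟨{ toFun := fun f => Φ.toFun f x
            map_add := fun f g hf hg => Φ.map_add f g hf hg x hx
            map_mul := fun f g hf hg => Φ.map_mul f g hf hg x hx
            map_smul := fun c f hf => Φ.map_smul c f hf x hx
            respects := fun f g hf hg h => Φ.respects f g hf hg h hx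
            nonzero := ⟨1, memAu_one, by show Φ.toFun 1 x ≠ 0; rw [phi_one Φ x hx]; exact one_ne_zero⟩
            cont := by
              obtain ⟨C, hC⟩ := Φ.cont
              exact ⟨C, fun f hf => hC f hf x hx⟩ }, fun f hf => rfl⟩
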